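/- For every k ≥ 0 and every x ∈ Cl^p(Q) ⊗ Λ^q(W), the k-th power of the operator E satisfies E^k(x) = (Π^{p+k} ⊗ id)(θ^k · x) = (−1)^{k(p+q)} (Π^{p+k} ⊗ id)(x · θ^k). -/

import Mathlib

open CliffordAlgebra
open scoped TensorProduct

/-- The linear map `φ : Λ(V) → Cl(Q)`, `φ(x) = ρL(x)(1)`. -/
noncomputable def cliffordPhi
    {K : Type*} [Field K] {V : Type*} [AddCommGroup V] [Module K V]
    {Q : QuadraticForm K V}
    (ρL : ExteriorAlgebra K V →ₐ[K] Module.End K (CliffordAlgebra Q)) :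
    ExteriorAlgebra K V →ₗ[K] CliffordAlgebra Q :=
  (LinearMap.applyₗ (1 : CliffordAlgebra Q)).comp ρL.toLinearMap

/-- The component `Cl^j(Q) := φ(Λ^j(V))` of the Clifford algebra. -/
noncomputable def cliffordComponent
    {K : Type*} [Field K] {V : Type*} [AddCommGroup V] [Module K V]
    {Q : QuadraticForm K V}
    (ρL : ExteriorAlgebra K V →ₐ[K] Module.End K (CliffordAlgebra Q)) (j : ℕ) :
    Submodule K (CliffordAlgebra Q) :=
  Submodule.map (cliffordPhi ρL)
    (LinearMap.range (ExteriorAlgebra.ι K : V →ₗ[K] ExteriorAlgebra K V) ^ j)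

/-- The component `A^{pq} = Cl^p(Q) ⊗ Λ^q(W)` of the tensor-product algebra
`A = Cl(Q) ⊗ Λ(W)`. -/
noncomputable def cliffordFormComponent
    {K : Type*} [Field K] {V : Type*} [AddCommGroup V] [Module K V]
    {W : Type*} [AddCommGroup W] [Module K W] {Q : QuadraticForm K V}
    (ρL : ExteriorAlgebra K V →ₐ[K] Module.End K (CliffordAlgebra Q)) (p q : ℕ) :
    Submodule K (CliffordAlgebra Q ⊗[K] ExteriorAlgebra K W) :=
  Submodule.span K
    {z | ∃ a ∈ cliffordComponent ρL p,
      ∃ α ∈ LinearMap.range (ExteriorAlgebra.ι K : W →ₗ[K] ExteriorAlgebra K W) ^ q,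
        z = a ⊗ₜ[K] α}

/-! For `a ∈ Cl^j` and `v ∈ V`, the graded anticommutator `ι v * a + (-1)^j • a * ι v = 2 L_v a`
lies in `Cl^{j+1}`, and the graded commutator `ι v * a - (-1)^j • a * ι v` lies in `Cl^{j-1}`: by
induction on `j`, since `Cl^{j+1}` is spanned by the `L_w b` with `b ∈ Cl^j`, and
`ι v ι w + ι w ι v = polar Q v w` turns the commutator of `L_w b` into a multiple of `b` minus the
anticommutator of a commutator of `b`. Halving both, left and right multiplication by `ι v`, hence
by `θ`, split as `θ y = u + z` and `y θ = (-1)^{j+m} • (u - z)` for `y ∈ A^{jm}`, with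
`u ∈ A^{j+1,m+1}` and `z ∈ A^{j-1,m+1}`; then `E y = u`. Iterating, `θ^k x` and
`(-1)^{k(p+q)} • x θ^k` differ from `E^k x ∈ A^{p+k,q+k}` by sums of components of Clifford degree
`< p + k`, which `Π^{p+k} ⊗ id` kills. -/

section MulSplits

variable {K B : Type*} [CommRing K] [Ring B] [Algebra K B]

def MulSplits (s : K) (P M : Submodule K B) (t y : B) : Prop :=
  ∃ u ∈ P, ∃ z ∈ M, t * y = u + z ∧ y * t = s • (u - z)

def SplitsGrading (C : ℕ → Submodule K B) (t : B) : Prop :=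
  ∀ j, ∀ a ∈ C j, MulSplits ((-1 : K) ^ j) (C (j + 1)) (C (j - 1)) t a

def SplitsBigrading (T : ℕ → ℕ → Submodule K B) (θ : B) : Prop :=
  ∀ j m, ∀ y ∈ T j m, MulSplits ((-1 : K) ^ (j + m)) (T (j + 1) (m + 1)) (T (j - 1) (m + 1)) θ y

variable {s : K} {P M : Submodule K B}

theorem MulSplits.add_left {t t' y : B} (h : MulSplits s P M t y) (h' : MulSplits s P M t' y) :
    MulSplits s P M (t + t') y := by
  obtain ⟨u, hu, z, hz, hl, hr⟩ := h
  obtain ⟨u', hu', z', hz', hl', hr'⟩ := h'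
  refine ⟨u + u', add_mem hu hu', z + z', add_mem hz hz', ?_, ?_⟩
  · rw [add_mul, hl, hl']
    abel
  · rw [mul_add, hr, hr', ← smul_add]
    abel_nf

theorem MulSplits.add_right {t y y' : B} (h : MulSplits s P M t y) (h' : MulSplits s P M t y') :
    MulSplits s P M t (y + y') := by
  obtain ⟨u, hu, z, hz, hl, hr⟩ := h
  obtain ⟨u', hu', z', hz', hl', hr'⟩ := h'
  refine ⟨u + u', add_mem hu hu', z + z', add_mem hz hz', ?_, ?_⟩
  · rw [mul_add, hl, hl']
    abel
  · rw [add_mul, hr, hr', ← smul_add]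
    abel_nf

theorem MulSplits.sum_left {ι : Type*} (S : Finset ι) {t : ι → B} {y : B}
    (h : ∀ i ∈ S, MulSplits s P M (t i) y) : MulSplits s P M (∑ i ∈ S, t i) y := by
  classical
  induction S using Finset.induction_on with
  | empty => exact ⟨0, zero_mem _, 0, zero_mem _, by simp, by simp⟩
  | insert i S hi ih =>
    rw [Finset.sum_insert hi]
    exact (h i (S.mem_insert_self i)).add_left (ih fun j hj => h j (S.mem_insert_of_mem hj))

theorem MulSplits.of_mem_span {t : B} {G : Set B} (h : ∀ y ∈ G, MulSplits s P M t y) {y : B}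
    (hy : y ∈ Submodule.span K G) : MulSplits s P M t y := by
  induction hy using Submodule.span_induction with
  | mem y hy => exact h y hy
  | zero => exact ⟨0, zero_mem _, 0, zero_mem _, by simp, by simp⟩
  | add y y' _ _ h h' => exact h.add_right h'
  | smul c y _ h =>
    obtain ⟨u, hu, z, hz, hl, hr⟩ := h
    refine ⟨c • u, P.smul_mem c hu, c • z, M.smul_mem c hz, ?_, ?_⟩
    · rw [mul_smul_comm, hl, smul_add]
    · rw [smul_mul_assoc, hr, ← smul_sub, smul_comm]

def twistedComm (σ : K) (t : B) : B →ₗ[K] B :=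
  LinearMap.mulLeft K t - σ • LinearMap.mulRight K t

theorem twistedComm_apply (σ : K) (t a : B) : twistedComm σ t a = t * a - σ • (a * t) := rfl

theorem twistedComm_one_algebraMap (t : B) (c : K) :
    twistedComm (1 : K) t (algebraMap K B c) = 0 := by
  rw [twistedComm_apply, one_smul, Algebra.commutes, sub_self]

theorem twistedComm_twistedComm_add {σ : K} (hσ : σ * σ = 1) (v w b : B) :
    twistedComm σ v (twistedComm σ w b) + twistedComm (-σ) w (twistedComm (-σ) v b) =
      (v * w + w * v) * b + b * (v * w + w * v) := by
  simp only [twistedComm_apply, mul_sub, sub_mul, mul_smul_comm, smul_mul_assoc, mul_add, add_mul,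
    mul_assoc]
  linear_combination (norm := module) hσ • (b * (w * v)) + hσ • (b * (v * w))

theorem neg_one_pow_val_mul (j : ℕ) (b : B) :
    (-1 : B) ^ (j : ZMod 2).val * b = (-1 : K) ^ j • b := by
  rw [ZMod.val_natCast, ← neg_one_pow_eq_pow_mod_two, Algebra.smul_def, map_pow, map_neg, map_one]

end MulSplits

theorem MulSplits.of_twistedComm {K B : Type*} [Field K] [NeZero (2 : K)] [Ring B] [Algebra K B]
    {P M : Submodule K B} {σ : K} (hσ : σ * σ = 1) {t a : B}
    (hP : twistedComm (-σ) t a ∈ P) (hM : twistedComm σ t a ∈ M) : MulSplits σ P M t a := by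
  refine ⟨(2 : K)⁻¹ • twistedComm (-σ) t a, P.smul_mem _ hP,
    (2 : K)⁻¹ • twistedComm σ t a, M.smul_mem _ hM, ?_, ?_⟩ <;>
  simp only [twistedComm_apply]
  · match_scalars <;> field_simp <;> ring
  · match_scalars <;> field_simp
    · linear_combination -2 * hσ
    · ring

theorem ExteriorAlgebra.mul_ι_of_mem_pow {K W : Type*} [CommRing K] [AddCommGroup W]
    [Module K W] {m : ℕ} {α : ExteriorAlgebra K W}
    (hα : α ∈ LinearMap.range (ι K : W →ₗ[K] ExteriorAlgebra K W) ^ m) (w : W) :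
    α * ι K w = (-1 : K) ^ m • (ι K w * α) := by
  induction m generalizing α with
  | zero =>
    rw [pow_zero, Submodule.mem_one] at hα
    obtain ⟨c, rfl⟩ := hα
    rw [pow_zero, one_smul, Algebra.commutes]
  | succ m ih =>
    rw [pow_succ'] at hα
    induction hα using Submodule.mul_induction_on' with
    | mem_mul_mem _ hv β hβ =>
      obtain ⟨v, rfl⟩ := hv
      rw [mul_assoc, ih hβ, mul_smul_comm, ← mul_assoc, ← mul_assoc,
        eq_neg_of_add_eq_zero_left (ι_add_mul_swap v w), neg_mul, pow_succ, mul_neg_one,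
        neg_smul, smul_neg]
    | add x _ y _ hx hy => rw [add_mul, hx, hy, mul_add, smul_add]

section TensorComponent

variable {K A : Type*} [CommRing K] [Ring A] [Algebra K A] (W : Type*) [AddCommGroup W]
  [Module K W]

def tensorComponent (C : ℕ → Submodule K A) (j m : ℕ) :
    Submodule K (A ⊗[K] ExteriorAlgebra K W) :=
  Submodule.span K
    {z | ∃ a ∈ C j, ∃ α ∈ LinearMap.range (ExteriorAlgebra.ι K : W →ₗ[K] ExteriorAlgebra K W) ^ m,
      z = a ⊗ₜ[K] α}

variable {W} {C : ℕ → Submodule K A}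

theorem rTensor_apply_of_mem_tensorComponent {π : ℕ → Module.End K A}
    (hπ : ∀ i j, ∀ a ∈ C j, π i a = if i = j then a else 0) (i : ℕ) {j m : ℕ}
    {y : A ⊗[K] ExteriorAlgebra K W} (hy : y ∈ tensorComponent W C j m) :
    (π i).rTensor (ExteriorAlgebra K W) y = if i = j then y else 0 := by
  induction hy using Submodule.span_induction with
  | mem y hy =>
    obtain ⟨a, ha, α, -, rfl⟩ := hy
    rw [LinearMap.rTensor_tmul, hπ i j a ha]
    split_ifs <;> simp
  | zero => simp
  | add y y' _ _ h h' => rw [map_add, h, h']; split_ifs <;> simp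
  | smul c y _ h => rw [map_smul, h]; split_ifs <;> simp

theorem MulSplits.tmul_ι {e a : A} {j m : ℕ}
    (h : MulSplits ((-1 : K) ^ j) (C (j + 1)) (C (j - 1)) e a) (w : W) {α : ExteriorAlgebra K W}
    (hα : α ∈ LinearMap.range (ExteriorAlgebra.ι K : W →ₗ[K] ExteriorAlgebra K W) ^ m) :
    MulSplits ((-1 : K) ^ (j + m)) (tensorComponent W C (j + 1) (m + 1))
      (tensorComponent W C (j - 1) (m + 1)) (e ⊗ₜ ExteriorAlgebra.ι K w) (a ⊗ₜ α) := by
  obtain ⟨u, hu, z, hz, hl, hr⟩ := h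
  have hwα : ExteriorAlgebra.ι K w * α ∈
      LinearMap.range (ExteriorAlgebra.ι K : W →ₗ[K] ExteriorAlgebra K W) ^ (m + 1) := by
    rw [pow_succ']
    exact Submodule.mul_mem_mul (LinearMap.mem_range_self _ w) hα
  refine ⟨u ⊗ₜ (ExteriorAlgebra.ι K w * α), Submodule.subset_span ⟨u, hu, _, hwα, rfl⟩,
    z ⊗ₜ (ExteriorAlgebra.ι K w * α), Submodule.subset_span ⟨z, hz, _, hwα, rfl⟩, ?_, ?_⟩
  · rw [Algebra.TensorProduct.tmul_mul_tmul, hl, TensorProduct.add_tmul]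
  · rw [Algebra.TensorProduct.tmul_mul_tmul, hr, ExteriorAlgebra.mul_ι_of_mem_pow hα,
      TensorProduct.smul_tmul_smul, ← pow_add, TensorProduct.sub_tmul]

theorem SplitsGrading.sum_tmul_ι {ι : Type*} (S : Finset ι) {e : ι → A} (f : ι → W)
    (he : ∀ i, SplitsGrading C (e i)) :
    SplitsBigrading (tensorComponent W C) (∑ i ∈ S, e i ⊗ₜ ExteriorAlgebra.ι K (f i)) :=
  fun j _ _ hy => MulSplits.sum_left S fun i _ => MulSplits.of_mem_span (by
    rintro _ ⟨a, ha, α, hα, rfl⟩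
    exact (he i j a ha).tmul_ι (f i) hα) hy

end TensorComponent

section PowerFormula

variable {K B : Type*} [CommRing K] [Ring B] [Algebra K B] {T : ℕ → ℕ → Submodule K B}

-- The projections are only specified on the components, so error terms are kept inside sums of them.
def sumBelow (T : ℕ → ℕ → Submodule K B) (d m : ℕ) : Submodule K B :=
  ⨆ j : Fin d, T j m

theorem mem_sumBelow {j d m : ℕ} (h : j < d) {y : B} (hy : y ∈ T j m) : y ∈ sumBelow T d m :=
  Submodule.mem_iSup_of_mem (⟨j, h⟩ : Fin d) hy

theorem proj_eq_zero_of_mem_sumBelow {π : ℕ → Module.End K B}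
    (hπ : ∀ i j m, ∀ y ∈ T j m, π i y = if i = j then y else 0)
    {d m : ℕ} {r : B} (hr : r ∈ sumBelow T d m) : π d r = 0 := by
  induction hr using Submodule.iSup_induction' with
  | mem j y hy => rw [hπ d j m y hy, if_neg (by omega)]
  | zero => exact map_zero _
  | add r r' _ _ h h' => rw [map_add, h, h', add_zero]

theorem SplitsBigrading.mul_mem_sumBelow {θ : B} (hθ : SplitsBigrading T θ) {d m : ℕ} {r : B}
    (hr : r ∈ sumBelow T d m) :
    θ * r ∈ sumBelow T (d + 1) (m + 1) ∧ r * θ ∈ sumBelow T (d + 1) (m + 1) := by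
  induction hr using Submodule.iSup_induction' with
  | mem j y hy =>
    obtain ⟨u, hu, z, hz, hl, hr⟩ := hθ j m y hy
    have hu' : u ∈ sumBelow T (d + 1) (m + 1) := mem_sumBelow (by omega) hu
    have hz' : z ∈ sumBelow T (d + 1) (m + 1) := mem_sumBelow (by omega) hz
    exact ⟨hl ▸ add_mem hu' hz', hr ▸ Submodule.smul_mem _ _ (sub_mem hu' hz')⟩
  | zero => simp
  | add r r' _ _ h h' =>
    rw [mul_add, add_mul]
    exact ⟨add_mem h.1 h'.1, add_mem h.2 h'.2⟩

end PowerFormula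

section PowerFormulaField

variable {K B : Type*} [Field K] [NeZero (2 : K)] [Ring B] [Algebra K B]
  {T : ℕ → ℕ → Submodule K B} {θ : B} {E : Module.End K B}

theorem apply_eq_of_mulSplits
    (hE : ∀ j m, ∀ y ∈ T j m, E y = (2 : K)⁻¹ • (θ * y + (-1 : K) ^ (j + m) • (y * θ)))
    {j m : ℕ} {y u z : B} (hy : y ∈ T j m) (hl : θ * y = u + z)
    (hr : y * θ = (-1 : K) ^ (j + m) • (u - z)) : E y = u := by
  rw [hE j m y hy, hl, hr, smul_smul, ← pow_add, Even.neg_one_pow ⟨_, rfl⟩, one_smul,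
    add_add_sub_cancel, ← two_smul K, smul_smul, inv_mul_cancel₀ two_ne_zero, one_smul]

theorem SplitsBigrading.pow_apply_mem_and_sub_mem_sumBelow (hθ : SplitsBigrading T θ)
    (hE : ∀ j m, ∀ y ∈ T j m, E y = (2 : K)⁻¹ • (θ * y + (-1 : K) ^ (j + m) • (y * θ)))
    {p q : ℕ} {x : B} (hx : x ∈ T p q) (k : ℕ) :
    (E ^ k) x ∈ T (p + k) (q + k) ∧
      θ ^ k * x - (E ^ k) x ∈ sumBelow T (p + k) (q + k) ∧
      x * θ ^ k - ((-1 : K) ^ (p + q)) ^ k • (E ^ k) x ∈ sumBelow T (p + k) (q + k) := by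
  induction k with
  | zero => simp [hx]
  | succ k ih =>
    obtain ⟨hy, hr, hs⟩ := ih
    obtain ⟨u, hu, z, hz, hl, hrt⟩ := hθ _ _ _ hy
    have hEu : (E ^ (k + 1)) x = u := by
      rw [pow_succ', Module.End.mul_apply]
      exact apply_eq_of_mulSplits hE hy hl hrt
    have hz' : z ∈ sumBelow T (p + (k + 1)) (q + (k + 1)) := mem_sumBelow (by omega) hz
    have hsign : (-1 : K) ^ (p + k + (q + k)) = (-1) ^ (p + q) := by
      rw [show p + k + (q + k) = p + q + 2 * k by ring, pow_add, pow_mul]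
      norm_num
    rw [hEu]
    refine ⟨hu, ?_, ?_⟩
    · have h : θ ^ (k + 1) * x - u = θ * (θ ^ k * x - (E ^ k) x) + z := by
        rw [mul_sub, hl, pow_succ', mul_assoc]
        abel
      rw [h]
      exact add_mem (hθ.mul_mem_sumBelow hr).1 hz'
    · have h : x * θ ^ (k + 1) - ((-1 : K) ^ (p + q)) ^ (k + 1) • u =
          (x * θ ^ k - ((-1 : K) ^ (p + q)) ^ k • (E ^ k) x) * θ -
            ((-1 : K) ^ (p + q)) ^ (k + 1) • z := by
        rw [sub_mul, smul_mul_assoc, hrt, hsign, smul_smul, ← pow_succ, pow_succ, ← mul_assoc,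
          smul_sub]
        abel
      rw [h]
      exact sub_mem (hθ.mul_mem_sumBelow hs).2 (Submodule.smul_mem _ _ hz')

theorem SplitsBigrading.pow_apply_eq_proj (hθ : SplitsBigrading T θ)
    {π : ℕ → Module.End K B} (hπ : ∀ i j m, ∀ y ∈ T j m, π i y = if i = j then y else 0)
    (hE : ∀ j m, ∀ y ∈ T j m, E y = (2 : K)⁻¹ • (θ * y + (-1 : K) ^ (j + m) • (y * θ)))
    {p q : ℕ} {x : B} (hx : x ∈ T p q) (k : ℕ) :
    (E ^ k) x = π (p + k) (θ ^ k * x) ∧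
      (E ^ k) x = (-1 : K) ^ (k * (p + q)) • π (p + k) (x * θ ^ k) := by
  obtain ⟨hy, hr, hs⟩ := hθ.pow_apply_mem_and_sub_mem_sumBelow hE hx k
  rw [← pow_mul'] at hs
  have hπy : π (p + k) ((E ^ k) x) = (E ^ k) x := by rw [hπ _ _ _ _ hy, if_pos rfl]
  have hsign : (-1 : K) ^ (k * (p + q)) * (-1) ^ (k * (p + q)) = 1 := by
    rw [← pow_add]
    exact Even.neg_one_pow ⟨_, rfl⟩
  constructor
  · rw [← sub_add_cancel (θ ^ k * x) ((E ^ k) x), map_add, proj_eq_zero_of_mem_sumBelow hπ hr,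
      zero_add, hπy]
  · rw [← sub_add_cancel (x * θ ^ k) ((-1 : K) ^ (k * (p + q)) • (E ^ k) x), map_add,
      proj_eq_zero_of_mem_sumBelow hπ hs, zero_add, map_smul, hπy, smul_smul, hsign, one_smul]

end PowerFormulaField

section Clifford

variable {K V : Type*} [Field K] [AddCommGroup V] [Module K V] {Q : QuadraticForm K V}
  {ρL : ExteriorAlgebra K V →ₐ[K] Module.End K (CliffordAlgebra Q)}
  {L : V →ₗ[K] Module.End K (CliffordAlgebra Q)}

theorem exists_algebraMap_of_mem_cliffordComponent_zero {a : CliffordAlgebra Q}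
    (ha : a ∈ cliffordComponent ρL 0) : ∃ c : K, a = algebraMap K _ c := by
  obtain ⟨ω, hω, rfl⟩ := ha
  obtain ⟨c, rfl⟩ := Submodule.mem_one.mp (by simpa using hω)
  exact ⟨c, by simp [cliffordPhi, Algebra.algebraMap_eq_smul_one]⟩

theorem twistedComm_one_eq_zero_of_mem_cliffordComponent_zero {a : CliffordAlgebra Q}
    (ha : a ∈ cliffordComponent ρL 0) (t : CliffordAlgebra Q) : twistedComm (1 : K) t a = 0 := by
  obtain ⟨c, rfl⟩ := exists_algebraMap_of_mem_cliffordComponent_zero ha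
  exact twistedComm_one_algebraMap t c

variable (hρL : ∀ v, ρL (ExteriorAlgebra.ι K v) = L v)
include hρL

theorem apply_mem_cliffordComponent_succ {j : ℕ} (v : V) {a : CliffordAlgebra Q}
    (ha : a ∈ cliffordComponent ρL j) : L v a ∈ cliffordComponent ρL (j + 1) := by
  obtain ⟨ω, hω, rfl⟩ := ha
  refine ⟨ExteriorAlgebra.ι K v * ω, ?_, ?_⟩
  · rw [pow_succ']
    exact Submodule.mul_mem_mul (LinearMap.mem_range_self _ v) hω
  · simp [cliffordPhi, hρL, Module.End.mul_apply]

theorem cliffordComponent_succ_le {j : ℕ} {S : Submodule K (CliffordAlgebra Q)}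
    (h : ∀ v, ∀ a ∈ cliffordComponent ρL j, L v a ∈ S) : cliffordComponent ρL (j + 1) ≤ S := by
  rw [cliffordComponent, Submodule.map_le_iff_le_comap, pow_succ', Submodule.mul_le]
  rintro _ ⟨v, rfl⟩ ω hω
  simpa [cliffordPhi, hρL, Module.End.mul_apply] using h v _ ⟨ω, hω, rfl⟩

variable (hL : ∀ (v : V) (i : ZMod 2) (a : CliffordAlgebra Q), a ∈ evenOdd Q i →
    L v a = (2 : K)⁻¹ • (ι Q v * a + (-1 : CliffordAlgebra Q) ^ i.val * (a * ι Q v)))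
include hL

theorem cliffordComponent_le_evenOdd (j : ℕ) : cliffordComponent ρL j ≤ evenOdd Q j := by
  induction j with
  | zero =>
    intro a ha
    obtain ⟨c, rfl⟩ := exists_algebraMap_of_mem_cliffordComponent_zero ha
    exact_mod_cast SetLike.algebraMap_mem_graded (evenOdd Q) c
  | succ j ih =>
    refine cliffordComponent_succ_le hρL fun v a ha => ?_
    have ha' := ih ha
    have hl := SetLike.mul_mem_graded (ι_mem_evenOdd_one Q v) ha'
    have hr := SetLike.mul_mem_graded ha' (ι_mem_evenOdd_one Q v)
    rw [add_comm] at hl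
    rw [hL v _ a ha', neg_one_pow_val_mul (K := K), Nat.cast_succ]
    exact Submodule.smul_mem _ _ (add_mem hl (Submodule.smul_mem _ _ hr))

theorem apply_eq_twistedComm {j : ℕ} (v : V) {a : CliffordAlgebra Q}
    (ha : a ∈ cliffordComponent ρL j) :
    L v a = (2 : K)⁻¹ • twistedComm ((-1 : K) ^ (j + 1)) (ι Q v) a := by
  rw [hL v _ a (cliffordComponent_le_evenOdd hρL hL j ha), neg_one_pow_val_mul (K := K),
    twistedComm_apply, pow_succ, mul_neg_one, neg_smul, sub_neg_eq_add]

variable [NeZero (2 : K)]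

theorem twistedComm_mem_cliffordComponent_succ {j : ℕ} (v : V) {a : CliffordAlgebra Q}
    (ha : a ∈ cliffordComponent ρL j) :
    twistedComm ((-1 : K) ^ (j + 1)) (ι Q v) a ∈ cliffordComponent ρL (j + 1) := by
  have h := Submodule.smul_mem _ (2 : K) (apply_mem_cliffordComponent_succ hρL v ha)
  rwa [apply_eq_twistedComm hρL hL v ha, smul_smul, mul_inv_cancel₀ two_ne_zero, one_smul] at h

theorem twistedComm_mem_cliffordComponent_pred (v : V) (j : ℕ) :
    ∀ a ∈ cliffordComponent ρL j,
      twistedComm ((-1 : K) ^ j) (ι Q v) a ∈ cliffordComponent ρL (j - 1) := by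
  induction j with
  | zero =>
    intro a ha
    rw [pow_zero, twistedComm_one_eq_zero_of_mem_cliffordComponent_zero ha]
    exact zero_mem _
  | succ j ih =>
    refine cliffordComponent_succ_le hρL
      (S := (cliffordComponent ρL j).comap (twistedComm ((-1 : K) ^ (j + 1)) (ι Q v)))
      fun w b hb => ?_
    have hsign : (-1 : K) ^ (j + 1) * (-1) ^ (j + 1) = 1 := by
      rw [← pow_add]
      exact Even.neg_one_pow ⟨_, rfl⟩
    have hneg : -(-1 : K) ^ (j + 1) = (-1) ^ j := by rw [pow_succ, mul_neg_one, neg_neg]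
    have hlower : twistedComm ((-1 : K) ^ j) (ι Q w) (twistedComm ((-1 : K) ^ j) (ι Q v) b) ∈
        cliffordComponent ρL j := by
      rcases j with _ | i
      · have h := ih b hb
        rw [pow_zero] at h ⊢
        rw [twistedComm_one_eq_zero_of_mem_cliffordComponent_zero h]
        exact zero_mem _
      · exact twistedComm_mem_cliffordComponent_succ hρL hL w (ih b hb)
    rw [Submodule.mem_comap, apply_eq_twistedComm hρL hL w hb, map_smul]
    refine Submodule.smul_mem _ _ ?_
    rw [eq_sub_of_add_eq (twistedComm_twistedComm_add hsign _ _ b), hneg, ι_mul_ι_add_swap,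
      ← Algebra.smul_def, ← Algebra.commutes, ← Algebra.smul_def]
    exact sub_mem (add_mem (Submodule.smul_mem _ _ hb) (Submodule.smul_mem _ _ hb)) hlower

theorem splitsGrading_ι (v : V) : SplitsGrading (cliffordComponent ρL) (ι Q v) := by
  intro j a ha
  refine MulSplits.of_twistedComm ?_ ?_ (twistedComm_mem_cliffordComponent_pred hρL hL v j a ha)
  · rw [← pow_add]
    exact Even.neg_one_pow ⟨_, rfl⟩
  · rw [← mul_neg_one, ← pow_succ]
    exact twistedComm_mem_cliffordComponent_succ hρL hL v ha

end Clifford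

/-- For every `k ≥ 0` and every `x ∈ Cl^p(Q) ⊗ Λ^q(W)`, the `k`-th power
of the operator `E` satisfies
`E^k(x) = (Π^{p+k} ⊗ id)(θ^k · x) = (−1)^{k(p+q)} (Π^{p+k} ⊗ id)(x · θ^k)`. -/
theorem clifford_form_E_power
    {K : Type*} [Field K] [CharZero K]
    {V : Type*} [AddCommGroup V] [Module K V]
    {W : Type*} [AddCommGroup W] [Module K W]
    (n : ℕ) (bV : Module.Basis (Fin n) K V) (bW : Module.Basis (Fin n) K W)
    (Q : QuadraticForm K V)
    (L : V →ₗ[K] Module.End K (CliffordAlgebra Q))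
    (hL : ∀ (v : V) (i : ZMod 2) (a : CliffordAlgebra Q), a ∈ evenOdd Q i →
      L v a = (2 : K)⁻¹ • (ι Q v * a + (-1 : CliffordAlgebra Q) ^ i.val * (a * ι Q v)))
    (ρL : ExteriorAlgebra K V →ₐ[K] Module.End K (CliffordAlgebra Q))
    (hρL : ∀ v : V, ρL (ExteriorAlgebra.ι K v) = L v)
    -- the projections `Π^i : Cl(Q) → Cl^i(Q)`
    (Pi : ℕ → Module.End K (CliffordAlgebra Q))
    (hPi : ∀ (i j : ℕ) (a : CliffordAlgebra Q), a ∈ cliffordComponent ρL j →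
      Pi i a = if i = j then a else 0)
    -- `θ = Σ_i ι(v_i) ⊗ ι_Λ(w_i)`
    (θ : CliffordAlgebra Q ⊗[K] ExteriorAlgebra K W)
    (hθ : θ = ∑ i : Fin n, ι Q (bV i) ⊗ₜ[K] ExteriorAlgebra.ι K (bW i))
    -- the operator `E`, acting on `A^{pq}` by `E(x) = (1/2)(θx + (−1)^{p+q} xθ)`
    (E : Module.End K (CliffordAlgebra Q ⊗[K] ExteriorAlgebra K W))
    (hE : ∀ (p q : ℕ) (x : CliffordAlgebra Q ⊗[K] ExteriorAlgebra K W),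
      x ∈ cliffordFormComponent (W := W) ρL p q →
      E x = (2 : K)⁻¹ • (θ * x + (-1 : K) ^ (p + q) • (x * θ)))
    (k p q : ℕ) (x : CliffordAlgebra Q ⊗[K] ExteriorAlgebra K W)
    (hx : x ∈ cliffordFormComponent (W := W) ρL p q) :
    (E ^ k) x = LinearMap.rTensor (ExteriorAlgebra K W) (Pi (p + k)) (θ ^ k * x) ∧
    (E ^ k) x =
      (-1 : K) ^ (k * (p + q)) •
        LinearMap.rTensor (ExteriorAlgebra K W) (Pi (p + k)) (x * θ ^ k) := by
  have hθ' : SplitsBigrading (cliffordFormComponent (W := W) ρL) θ :=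
    hθ ▸ SplitsGrading.sum_tmul_ι Finset.univ bW fun i => splitsGrading_ι hρL hL (bV i)
  exact hθ'.pow_apply_eq_proj (fun i _ _ _ hy => rTensor_apply_of_mem_tensorComponent hPi i hy)
    hE hx k
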